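/- Let κ_diag = λ_1 e_1^{⊗4} + λ_2 e_2^{⊗4} ∈ S^4(R^2) and q_1 = (cos θ, sin θ), q_2 = (-sin θ, cos θ). Define Φ(θ) = ⟨κ_diag, q_1^{⊗4}⟩² + ⟨κ_diag, q_2^{⊗4}⟩² and u = sin²θ cos²θ. Then Φ(θ) = (λ_1² + λ_2²)(1 - 4u + 2u²) + 4λ_1λ_2u², and Φ(0) - Φ(θ) ≥ (1/2)(λ_1 - λ_2)² sin²(2θ). -/
import Mathlib


open Real

/-- The diagonal order-4 tensor `λ₁ e₁^{⊗4} + λ₂ e₂^{⊗4} ∈ S⁴(ℝ²)`. -/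
noncomputable def kappaDiag4 (l1 l2 : ℝ) : (Fin 4 → Fin 2) → ℝ :=
  fun i => if ∀ k, i k = 0 then l1 else if ∀ k, i k = 1 then l2 else 0

/-- The ICA contrast `Φ(θ) = ⟨κ_diag, q₁^{⊗4}⟩² + ⟨κ_diag, q₂^{⊗4}⟩²` for the rotated
frame `q₁ = (cos θ, sin θ)`, `q₂ = (-sin θ, cos θ)`. -/
noncomputable def Phi4 (l1 l2 θ : ℝ) : ℝ :=
  (∑ i : Fin 4 → Fin 2, kappaDiag4 l1 l2 i * ∏ k, (![cos θ, sin θ]) (i k)) ^ 2 +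
    (∑ i : Fin 4 → Fin 2, kappaDiag4 l1 l2 i * ∏ k, (![-sin θ, cos θ]) (i k)) ^ 2

lemma sum_kappa (l1 l2 : ℝ) (v : Fin 2 → ℝ) :
    ∑ i : Fin 4 → Fin 2, kappaDiag4 l1 l2 i * ∏ k, v (i k)
      = l1 * v 0 ^ 4 + l2 * v 1 ^ 4 := by
  classical
  rw [← Finset.sum_subset
      (Finset.subset_univ ({fun _ => 0, fun _ => 1} : Finset (Fin 4 → Fin 2)))]
  · rw [Finset.sum_insert (by decide), Finset.sum_singleton]
    simp [kappaDiag4, Fin.prod_univ_four]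
  · intro i _ hi
    simp only [Finset.mem_insert, Finset.mem_singleton] at hi
    push_neg at hi
    have h0 : ¬ ∀ k, i k = 0 := fun h => hi.1 (funext h)
    have h1 : ¬ ∀ k, i k = 1 := fun h => hi.2 (funext h)
    simp [kappaDiag4, h0, h1]

/-- With `u = sin²θ cos²θ`, `Φ(θ) = (λ₁² + λ₂²)(1 - 4u + 2u²) + 4λ₁λ₂u²`, and
`Φ(0) - Φ(θ) ≥ (1/2)(λ₁ - λ₂)² sin²(2θ)`. -/
theorem Phi4_formula (l1 l2 : ℝ) :
    (∀ θ : ℝ, Phi4 l1 l2 θ =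
      (l1 ^ 2 + l2 ^ 2) *
          (1 - 4 * (sin θ ^ 2 * cos θ ^ 2) + 2 * (sin θ ^ 2 * cos θ ^ 2) ^ 2) +
        4 * l1 * l2 * (sin θ ^ 2 * cos θ ^ 2) ^ 2) ∧
    (∀ θ : ℝ, (1 / 2) * (l1 - l2) ^ 2 * sin (2 * θ) ^ 2 ≤
      Phi4 l1 l2 0 - Phi4 l1 l2 θ) := by
  have key : ∀ θ : ℝ, Phi4 l1 l2 θ =
      (l1 ^ 2 + l2 ^ 2) *
          (1 - 4 * (sin θ ^ 2 * cos θ ^ 2) + 2 * (sin θ ^ 2 * cos θ ^ 2) ^ 2) +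
        4 * l1 * l2 * (sin θ ^ 2 * cos θ ^ 2) ^ 2 := by
    intro θ
    have h := sin_sq_add_cos_sq θ
    simp only [Phi4, sum_kappa]
    simp only [Matrix.cons_val_zero, Matrix.cons_val_one, Matrix.head_cons]
    linear_combination (l1 ^ 2 + l2 ^ 2) * (sin θ ^ 2 + cos θ ^ 2 + 1) *
      ((sin θ ^ 2 - cos θ ^ 2) ^ 2 + 1) * h
  refine ⟨key, fun θ => ?_⟩
  rw [key θ, key 0, sin_two_mul]
  simp only [Real.sin_zero, Real.cos_zero]
  have h := sin_sq_add_cos_sq θ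
  have hle : sin θ ^ 2 * cos θ ^ 2 ≤ 1 := by nlinarith [sq_nonneg (sin θ ^ 2 - cos θ ^ 2)]
  have hu : 0 ≤ (l1 + l2) ^ 2 * (sin θ ^ 2 * cos θ ^ 2) * (1 - sin θ ^ 2 * cos θ ^ 2) :=
    mul_nonneg (mul_nonneg (sq_nonneg _) (mul_nonneg (sq_nonneg _) (sq_nonneg _)))
      (by linarith)
  nlinarith [hu]
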